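/- Let d ≥ 1, let P be a real polynomial in one variable with deg P ≤ d, and let Z ⊆ [−1,1] be a Lebesgue measurable set whose Lebesgue measure μ satisfies μ > 0. Then sup_{x ∈ [−1,1]} |P(x)| ≤ T_d((4 − μ)/μ) · sup_{x ∈ Z} |P(x)|. -/

import Mathlib

open Polynomial MeasureTheory Set
open Finset Real


lemma T_eval_cosh (t : ℝ) : ∀ n : ℕ, (Chebyshev.T ℝ (n:ℤ)).eval (Real.cosh t) = Real.cosh (n * t) := by
  intro n
  induction n using Nat.twoStepInduction with
  | zero => simp
  | one => simp
  | more n ih1 ih2 =>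
    have h : ((n + 2 : ℕ) : ℤ) = (n : ℤ) + 2 := by push_cast; ring
    have h1 : ((n + 1 : ℕ) : ℤ) = (n : ℤ) + 1 := by push_cast; ring
    rw [h1] at ih2
    rw [h, Chebyshev.T_add_two]
    push_cast
    simp only [eval_sub, eval_mul, eval_ofNat, eval_X]
    rw [ih2, ih1]
    have e1 : ((n:ℝ) + 2) * t = ((n+1) * t) + t := by ring
    have e2 : (n:ℝ) * t = ((n+1) * t) - t := by ring
    rw [e1, e2, Real.cosh_add, Real.cosh_sub]
    push_cast
    ring

lemma natDegree_T_le : ∀ n : ℕ, (Chebyshev.T ℝ (n:ℤ)).natDegree ≤ n := by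
  intro n
  induction n using Nat.twoStepInduction with
  | zero => simp
  | one => simp [Polynomial.natDegree_X_le]
  | more n ih1 ih2 =>
    have h : ((n + 2 : ℕ) : ℤ) = (n : ℤ) + 2 := by push_cast; ring
    have h1 : ((n + 1 : ℕ) : ℤ) = (n : ℤ) + 1 := by push_cast; ring
    rw [h1] at ih2
    rw [h, Chebyshev.T_add_two]
    refine le_trans (natDegree_sub_le _ _) ?_
    simp only [max_le_iff]
    constructor
    · refine le_trans (natDegree_mul_le) ?_
      have : (2 * X : ℝ[X]).natDegree ≤ 1 := by
        refine le_trans natDegree_mul_le ?_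
        simp [Polynomial.natDegree_X_le]
      omega
    · omega

lemma cosh_surj {y : ℝ} (hy : 1 ≤ y) :
    Real.cosh (Real.log (y + Real.sqrt (y^2 - 1))) = y := by
  have hs : Real.sqrt (y^2-1) ^ 2 = y^2 - 1 := Real.sq_sqrt (by nlinarith)
  have hsn : 0 ≤ Real.sqrt (y^2-1) := Real.sqrt_nonneg _
  have hpos : 0 < y + Real.sqrt (y^2 - 1) := by nlinarith
  rw [Real.cosh_eq, Real.exp_log hpos, Real.exp_neg, Real.exp_log hpos]
  have hinv : (y + Real.sqrt (y^2-1))⁻¹ = y - Real.sqrt (y^2-1) :=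
    inv_eq_of_mul_eq_one_right (by nlinarith)
  rw [hinv]; ring

lemma T_mono (d : ℕ) {u v : ℝ} (hu : 1 ≤ u) (huv : u ≤ v) :
    (Chebyshev.T ℝ (d:ℤ)).eval u ≤ (Chebyshev.T ℝ (d:ℤ)).eval v := by
  have hv : 1 ≤ v := le_trans hu huv
  have key : ∀ w : ℝ, 1 ≤ w → ∃ s : ℝ, 0 ≤ s ∧ Real.cosh s = w := by
    intro w hw
    refine ⟨Real.log (w + Real.sqrt (w^2-1)), ?_, cosh_surj hw⟩
    have : 1 ≤ w + Real.sqrt (w^2-1) := by nlinarith [Real.sqrt_nonneg (w^2-1)]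
    exact Real.log_nonneg this
  obtain ⟨s, hs0, hsc⟩ := key u hu
  obtain ⟨r, hr0, hrc⟩ := key v hv
  have hsr : s ≤ r := by
    by_contra h
    push_neg at h
    have : Real.cosh r < Real.cosh s :=
      Real.cosh_lt_cosh.mpr (by rw [abs_of_nonneg hr0, abs_of_nonneg hs0]; exact h)
    rw [hsc, hrc] at this; linarith
  rw [← hsc, ← hrc, T_eval_cosh, T_eval_cosh]
  exact Real.cosh_le_cosh.mpr (by rw [abs_of_nonneg (by positivity), abs_of_nonneg (by positivity)]; exact mul_le_mul_of_nonneg_left hsr (by positivity))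

lemma one_le_T (d : ℕ) {u : ℝ} (hu : 1 ≤ u) : 1 ≤ (Chebyshev.T ℝ (d:ℤ)).eval u := by
  have h1 : (Chebyshev.T ℝ (d:ℤ)).eval 1 = 1 := by
    have := T_eval_cosh 0 d
    simpa using this
  rw [← h1]; exact T_mono d le_rfl hu

noncomputable def cnode (d : ℕ) (c e : ℝ) (i : ℕ) : ℝ :=
  (c+e)/2 + ((e-c)/2) * Real.cos (((d-i : ℕ) : ℝ) * Real.pi / d)

lemma cnode_lt {d : ℕ} (hd : 1 ≤ d) {c e : ℝ} (hce : c < e) {i j : ℕ}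
    (hj : j ≤ d) (hij : i < j) : cnode d c e i < cnode d c e j := by
  unfold cnode
  have hdr : (0:ℝ) < d := by exact_mod_cast hd
  have hpi : (0:ℝ) < Real.pi := Real.pi_pos
  have key : Real.cos (((d-i : ℕ) : ℝ) * Real.pi / d) < Real.cos (((d-j : ℕ) : ℝ) * Real.pi / d) := by
    apply Real.strictAntiOn_cos
    · constructor
      · positivity
      · rw [div_le_iff₀ hdr]
        have : ((d - j : ℕ) : ℝ) ≤ d := by exact_mod_cast Nat.sub_le d j
        nlinarith
    · constructor
      · positivity
      · rw [div_le_iff₀ hdr]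
        have : ((d - i : ℕ) : ℝ) ≤ d := by exact_mod_cast Nat.sub_le d i
        nlinarith
    · have hn : (d - j : ℕ) < (d - i : ℕ) := by omega
      have hn' : ((d - j : ℕ) : ℝ) < ((d - i : ℕ) : ℝ) := by exact_mod_cast hn
      rw [div_lt_div_iff₀ hdr hdr]
      nlinarith [mul_lt_mul_of_pos_right hn' (mul_pos hpi hdr)]
  nlinarith

lemma cnode_mem {d : ℕ} (hd : 1 ≤ d) {c e : ℝ} (hce : c ≤ e) (i : ℕ) :
    cnode d c e i ∈ Icc c e := by
  unfold cnode
  have h1 := Real.neg_one_le_cos (((d-i : ℕ) : ℝ) * Real.pi / d)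
  have h2 := Real.cos_le_one (((d-i : ℕ) : ℝ) * Real.pi / d)
  constructor <;> nlinarith

lemma cnode_zero {d : ℕ} (hd : 1 ≤ d) (c e : ℝ) : cnode d c e 0 = c := by
  unfold cnode
  have hdr : (d:ℝ) ≠ 0 := by positivity
  rw [Nat.sub_zero]
  have h : ((d:ℝ)) * Real.pi / (d:ℝ) = Real.pi := by field_simp
  rw [h, Real.cos_pi]
  ring

lemma cnode_last {d : ℕ} (hd : 1 ≤ d) (c e : ℝ) : cnode d c e d = e := by
  unfold cnode
  simp [Nat.sub_self]
  ring

lemma erase_range_split {d i : ℕ} (hi : i ≤ d) :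
    (Finset.range (d+1)).erase i = Finset.range i ∪ Finset.Ico (i+1) (d+1) := by
  ext j
  simp only [Finset.mem_erase, Finset.mem_range, Finset.mem_union, Finset.mem_Ico]
  omega

lemma sign_prod {d i : ℕ} (hi : i ≤ d) (w : ℕ → ℝ)
    (hw : ∀ j k, k ≤ d → j < k → w j < w k) :
    ∏ j ∈ (Finset.range (d+1)).erase i, (w i - w j)⁻¹
      = (-1)^(d-i) * ∏ j ∈ (Finset.range (d+1)).erase i, |w i - w j|⁻¹ := by
  have hdisj : Disjoint (Finset.range i) (Finset.Ico (i+1) (d+1)) := by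
    simp only [Finset.disjoint_left, Finset.mem_range, Finset.mem_Ico]
    omega
  rw [erase_range_split hi, Finset.prod_union hdisj, Finset.prod_union hdisj]
  have h1 : ∏ j ∈ Finset.range i, (w i - w j)⁻¹ = ∏ j ∈ Finset.range i, |w i - w j|⁻¹ := by
    apply Finset.prod_congr rfl
    intro j hj
    rw [Finset.mem_range] at hj
    rw [abs_of_pos (sub_pos.mpr (hw j i hi hj))]
  have h2 : ∏ j ∈ Finset.Ico (i+1) (d+1), (w i - w j)⁻¹
      = (-1)^(d-i) * ∏ j ∈ Finset.Ico (i+1) (d+1), |w i - w j|⁻¹ := by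
    have hc : ∀ j ∈ Finset.Ico (i+1) (d+1), (w i - w j)⁻¹ = (-1) * |w i - w j|⁻¹ := by
      intro j hj
      rw [Finset.mem_Ico] at hj
      have hlt : w i - w j < 0 := sub_neg.mpr (hw i j (by omega) (by omega))
      rw [abs_of_neg hlt, inv_neg]
      ring
    rw [Finset.prod_congr rfl hc, Finset.prod_mul_distrib, Finset.prod_const, Nat.card_Ico]
    congr 2
    omega
  rw [h1, h2]
  ring

lemma chebSum (d : ℕ) (hd : 1 ≤ d) (c e y : ℝ) (hce : c < e) :
    ∑ i ∈ Finset.range (d+1), ∏ j ∈ (Finset.range (d+1)).erase i,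
        ((y - cnode d c e j) / |cnode d c e i - cnode d c e j|)
      = (Chebyshev.T ℝ (d:ℤ)).eval ((2*y - (c+e))/(e-c)) := by
  have hec : e - c ≠ 0 := by linarith
  have hdr : (0:ℝ) < d := by exact_mod_cast hd
  set L : ℝ[X] := C (2/(e-c)) * X + C (-(c+e)/(e-c)) with hL
  set f : ℝ[X] := (Chebyshev.T ℝ (d:ℤ)).comp L with hf
  have hinj : Set.InjOn (cnode d c e) (Finset.range (d+1)) := by
    intro u hu v hv huv
    simp only [Finset.coe_range, Set.mem_Iio] at hu hv
    by_contra hne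
    rcases Nat.lt_or_ge u v with h | h
    · exact absurd huv (ne_of_lt (cnode_lt hd hce (by omega) h))
    · have : v < u := by omega
      exact absurd huv.symm (ne_of_lt (cnode_lt hd hce (by omega) this))
  have hdeg : f.degree < ((Finset.range (d+1)).card : ℕ) := by
    rw [Finset.card_range]
    refine lt_of_le_of_lt (Polynomial.degree_le_natDegree) ?_
    have h1 : f.natDegree ≤ d := by
      refine le_trans (Polynomial.natDegree_comp_le) ?_
      have h2 : L.natDegree ≤ 1 := by
        refine le_trans (Polynomial.natDegree_add_le _ _) ?_
        simp only [Polynomial.natDegree_C, max_le_iff]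
        constructor
        · refine le_trans (Polynomial.natDegree_mul_le) ?_
          simp [Polynomial.natDegree_X_le]
        · omega
      calc (Chebyshev.T ℝ (d:ℤ)).natDegree * L.natDegree
          ≤ d * 1 := Nat.mul_le_mul (natDegree_T_le d) h2
        _ = d := by omega
    exact_mod_cast Nat.lt_succ_of_le h1
  have heq := Lagrange.eq_interpolate hinj hdeg
  have heval := congrArg (Polynomial.eval y) heq
  rw [Lagrange.interpolate_apply] at heval
  rw [Polynomial.eval_finset_sum] at heval
  have hfy : f.eval y = (Chebyshev.T ℝ (d:ℤ)).eval ((2*y - (c+e))/(e-c)) := by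
    have hLy : Polynomial.eval y L = (2*y - (c+e))/(e-c) := by
      rw [hL]
      simp only [Polynomial.eval_add, Polynomial.eval_mul, Polynomial.eval_C, Polynomial.eval_X]
      field_simp
      ring
    rw [hf, Polynomial.eval_comp, hLy]
  have hfnode : ∀ i, i ≤ d → f.eval (cnode d c e i) = (-1)^(d-i) := by
    intro i hi
    have hLe : Polynomial.eval (cnode d c e i) L = Real.cos (((d-i:ℕ):ℝ) * Real.pi / d) := by
      rw [hL]
      simp only [Polynomial.eval_add, Polynomial.eval_mul, Polynomial.eval_C, Polynomial.eval_X]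
      unfold cnode
      field_simp
      ring
    rw [hf, Polynomial.eval_comp, hLe, Chebyshev.T_real_cos]
    have harg : ((d:ℤ):ℝ) * (((d-i:ℕ):ℝ) * Real.pi / d) = ((d-i:ℕ):ℝ) * Real.pi := by
      push_cast
      field_simp
    rw [harg]
    have := Real.cos_add_nat_mul_pi 0 (d-i)
    simpa using this
  simp only [Polynomial.eval_mul, Polynomial.eval_C] at heval
  rw [← hfy, heval]
  apply Finset.sum_congr rfl
  intro i hi
  rw [Finset.mem_range] at hi
  have hi' : i ≤ d := by omega
  have hbasis : Polynomial.eval y (Lagrange.basis (Finset.range (d+1)) (cnode d c e) i)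
      = ∏ j ∈ (Finset.range (d+1)).erase i,
          ((cnode d c e i - cnode d c e j)⁻¹ * (y - cnode d c e j)) := by
    unfold Lagrange.basis Lagrange.basisDivisor
    rw [Polynomial.eval_prod]
    apply Finset.prod_congr rfl
    intro j _
    simp only [Polynomial.eval_mul, Polynomial.eval_C, Polynomial.eval_sub, Polynomial.eval_X]
  rw [hfnode i hi', hbasis]
  calc ∏ j ∈ (Finset.range (d+1)).erase i,
        ((y - cnode d c e j) / |cnode d c e i - cnode d c e j|)
      = (∏ j ∈ (Finset.range (d+1)).erase i, (y - cnode d c e j))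
          * ∏ j ∈ (Finset.range (d+1)).erase i, |cnode d c e i - cnode d c e j|⁻¹ := by
        rw [← Finset.prod_mul_distrib]
        apply Finset.prod_congr rfl
        intro j _
        rw [div_eq_mul_inv]
    _ = (-1)^(d-i) * ((-1)^(d-i) * ((∏ j ∈ (Finset.range (d+1)).erase i, (y - cnode d c e j))
          * ∏ j ∈ (Finset.range (d+1)).erase i, |cnode d c e i - cnode d c e j|⁻¹)) := by
        rw [← mul_assoc, ← mul_pow]
        norm_num
    _ = (-1)^(d-i) * ((∏ j ∈ (Finset.range (d+1)).erase i, (cnode d c e i - cnode d c e j)⁻¹)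
          * ∏ j ∈ (Finset.range (d+1)).erase i, (y - cnode d c e j)) := by
        rw [sign_prod hi' (cnode d c e) (fun j k hk hjk => cnode_lt hd hce hk hjk)]
        ring
    _ = (-1)^(d-i) * ∏ j ∈ (Finset.range (d+1)).erase i,
          ((cnode d c e i - cnode d c e j)⁻¹ * (y - cnode d c e j)) := by
        rw [Finset.prod_mul_distrib]


lemma F_mono (Z' : Set ℝ) (hfin : volume Z' ≠ ⊤) :
    Monotone (fun s => (volume (Z' ∩ Iic s)).toReal) := by
  intro s t hst
  apply ENNReal.toReal_mono (ne_top_of_le_ne_top hfin (measure_mono inter_subset_left))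
  exact measure_mono (inter_subset_inter_right _ (Iic_subset_Iic.mpr hst))

lemma F_lip (Z' : Set ℝ) (hfin : volume Z' ≠ ⊤) {s t : ℝ} (hst : s ≤ t) :
    (volume (Z' ∩ Iic t)).toReal ≤ (volume (Z' ∩ Iic s)).toReal + (t - s) := by
  have hsub : Z' ∩ Iic t ⊆ (Z' ∩ Iic s) ∪ Ioc s t := by
    intro z hz
    rcases le_or_gt z s with h|h
    · exact Or.inl ⟨hz.1, h⟩
    · exact Or.inr ⟨h, hz.2⟩
  have h1 : volume (Z' ∩ Iic t) ≤ volume (Z' ∩ Iic s) + ENNReal.ofReal (t - s) := by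
    refine le_trans (measure_mono hsub) ?_
    refine le_trans (measure_union_le _ _) ?_
    rw [Real.volume_Ioc]
  have hfin1 : volume (Z' ∩ Iic s) ≠ ⊤ :=
    ne_top_of_le_ne_top hfin (measure_mono inter_subset_left)
  calc (volume (Z' ∩ Iic t)).toReal
      ≤ (volume (Z' ∩ Iic s) + ENNReal.ofReal (t-s)).toReal :=
        ENNReal.toReal_mono (ENNReal.add_ne_top.mpr ⟨hfin1, ENNReal.ofReal_ne_top⟩) h1
    _ = _ := by
        rw [ENNReal.toReal_add hfin1 ENNReal.ofReal_ne_top,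
          ENNReal.toReal_ofReal (by linarith)]

lemma F_cont (Z' : Set ℝ) (hfin : volume Z' ≠ ⊤) :
    Continuous (fun s => (volume (Z' ∩ Iic s)).toReal) := by
  set F := fun s => (volume (Z' ∩ Iic s)).toReal with hF
  have : LipschitzWith 1 F := by
    apply LipschitzWith.of_dist_le_mul
    intro s t
    rw [Real.dist_eq, Real.dist_eq]
    simp only [NNReal.coe_one, one_mul]
    rw [abs_sub_le_iff]
    rcases le_total s t with h | h
    · have h1 := F_mono Z' hfin h
      have h2 := F_lip Z' hfin h
      rw [abs_of_nonpos (by linarith)]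
      constructor <;> simp only [hF] at * <;> linarith
    · have h1 := F_mono Z' hfin h
      have h2 := F_lip Z' hfin h
      rw [abs_of_nonneg (by linarith)]
      constructor <;> simp only [hF] at * <;> linarith
  exact this.continuous

lemma quantile (Z' : Set ℝ) (a b : ℝ) (hZ : Z' ⊆ Icc a b)
    (hfin : volume Z' ≠ ⊤) {τ : ℝ} (hτ0 : 0 < τ) (hτμ : τ ≤ (volume Z').toReal) :
    ∃ x ∈ Icc a b, x ∈ closure Z' ∧ (volume (Z' ∩ Iic x)).toReal = τ := by
  set F := fun s => (volume (Z' ∩ Iic s)).toReal with hF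
  have hcont : Continuous F := F_cont Z' hfin
  set S := {s : ℝ | τ ≤ F s} with hS
  have hbS : b ∈ S := by
    have : Z' ∩ Iic b = Z' := inter_eq_left.mpr (fun z hz => (hZ hz).2)
    simp only [hS, Set.mem_setOf_eq, hF, this]
    exact hτμ
  have hSsub : S ⊆ Ici a := by
    intro s hs
    by_contra hcon
    rw [Set.mem_Ici] at hcon
    push_neg at hcon
    have hempty : Z' ∩ Iic s = ∅ := by
      ext z
      simp only [Set.mem_inter_iff, Set.mem_Iic, Set.mem_empty_iff_false, iff_false, not_and]
      intro hz
      have := (hZ hz).1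
      linarith
    have : F s = 0 := by simp [hF, hempty]
    simp only [hS, Set.mem_setOf_eq, this] at hs
    linarith
  have hclosed : IsClosed S := isClosed_le continuous_const hcont
  have hbdd : BddBelow S := ⟨a, fun s hs => hSsub hs⟩
  set x := sInf S with hx
  have hxS : x ∈ S := hclosed.csInf_mem ⟨b, hbS⟩ hbdd
  have hax : a ≤ x := hSsub hxS
  have hxb : x ≤ b := csInf_le hbdd hbS
  have hFxge : τ ≤ F x := hxS
  have hlt : ∀ s, s < x → F s < τ := by
    intro s hs
    by_contra hcon
    push_neg at hcon
    exact absurd (csInf_le hbdd (show s ∈ S from hcon)) (not_le.mpr hs)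
  have hFxle : F x ≤ τ := by
    have htend : Filter.Tendsto (fun n : ℕ => F (x - 1/(n+1))) Filter.atTop (nhds (F x)) := by
      apply (hcont.tendsto x).comp
      have : Filter.Tendsto (fun n : ℕ => x - 1/(n+1)) Filter.atTop (nhds (x - 0)) := by
        apply Filter.Tendsto.const_sub
        exact tendsto_one_div_add_atTop_nhds_zero_nat
      simpa using this
    refine le_of_tendsto htend (Filter.Eventually.of_forall fun n => ?_)
    have : (0:ℝ) < 1/(n+1) := by positivity
    exact (hlt _ (by linarith)).le
  have hclosure : x ∈ closure Z' := by
    rw [Metric.mem_closure_iff]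
    intro ε hε
    have hlt2 : F (x - ε/2) < τ := hlt _ (by linarith)
    have hne : (Z' ∩ Ioc (x - ε/2) x).Nonempty := by
      by_contra hcon
      rw [Set.not_nonempty_iff_eq_empty] at hcon
      have hsub : Z' ∩ Iic x ⊆ Z' ∩ Iic (x - ε/2) := by
        intro z hz
        refine ⟨hz.1, ?_⟩
        rw [Set.mem_Iic]
        by_contra hz2
        push_neg at hz2
        have : z ∈ Z' ∩ Ioc (x - ε/2) x := ⟨hz.1, hz2, hz.2⟩
        rw [hcon] at this
        exact this
      have : F x ≤ F (x - ε/2) :=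
        ENNReal.toReal_mono (ne_top_of_le_ne_top hfin (measure_mono inter_subset_left))
          (measure_mono hsub)
      linarith
    obtain ⟨z, hzZ, hz1, hz2⟩ := hne
    exact ⟨z, hzZ, by rw [Real.dist_eq, abs_of_nonneg (by linarith)]; linarith⟩
  exact ⟨x, ⟨hax, hxb⟩, hclosure, le_antisymm hFxle hFxge⟩

lemma lagrange_eval (d : ℕ) (v : ℕ → ℝ) (hinj : Set.InjOn v (Finset.range (d+1)))
    (P : ℝ[X]) (hP : P.natDegree ≤ d) (y : ℝ) :
    P.eval y = ∑ i ∈ Finset.range (d+1), P.eval (v i) *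
      ∏ j ∈ (Finset.range (d+1)).erase i, ((v i - v j)⁻¹ * (y - v j)) := by
  have hdeg : P.degree < ((Finset.range (d+1)).card : ℕ) := by
    rw [Finset.card_range]
    refine lt_of_le_of_lt (Polynomial.degree_le_natDegree) ?_
    exact_mod_cast Nat.lt_succ_of_le hP
  have heq := Lagrange.eq_interpolate hinj hdeg
  have heval := congrArg (Polynomial.eval y) heq
  rw [Lagrange.interpolate_apply, Polynomial.eval_finset_sum] at heval
  simp only [Polynomial.eval_mul, Polynomial.eval_C] at heval
  rw [heval]
  apply Finset.sum_congr rfl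
  intro i hi
  congr 1
  unfold Lagrange.basis Lagrange.basisDivisor
  rw [Polynomial.eval_prod]
  apply Finset.prod_congr rfl
  intro j _
  simp only [Polynomial.eval_mul, Polynomial.eval_C, Polynomial.eval_sub, Polynomial.eval_X]

lemma remez_right_aux (d : ℕ) (hd : 1 ≤ d) (P : Polynomial ℝ) (hP : P.natDegree ≤ d)
    (a b : ℝ) (Z' : Set ℝ) (hZ : Z' ⊆ Icc a b) (hμ : 0 < volume Z')
    (m : ℝ) (hm0 : 0 < m) (hmμ : m < (volume Z').toReal) :
    |P.eval b| ≤ (Chebyshev.T ℝ (d:ℤ)).eval ((2*(b-a) - m)/m)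
      * sSup ((fun y => |P.eval y|) '' Z') := by
  obtain ⟨z0, hz0⟩ := nonempty_of_measure_ne_zero hμ.ne'
  have hab0 : a ≤ b := le_trans (hZ hz0).1 (hZ hz0).2
  have hfin : volume Z' ≠ ⊤ := by
    refine ne_top_of_le_ne_top ?_ (measure_mono hZ)
    rw [Real.volume_Icc]
    exact ENNReal.ofReal_ne_top
  set μ' := (volume Z').toReal with hμ'def
  have hμ'pos : 0 < μ' := ENNReal.toReal_pos hμ.ne' hfin
  have hμle : μ' ≤ b - a := by
    have h1 : volume Z' ≤ volume (Icc a b) := measure_mono hZ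
    rw [Real.volume_Icc] at h1
    calc μ' ≤ (ENNReal.ofReal (b-a)).toReal := ENNReal.toReal_mono ENNReal.ofReal_ne_top h1
      _ = b - a := ENNReal.toReal_ofReal (by linarith)
  have hab : a < b := by linarith
  set M := sSup ((fun y => |P.eval y|) '' Z') with hM
  have hcont : Continuous (fun y : ℝ => |P.eval y|) := (Polynomial.continuous P).abs
  have hMbdd : BddAbove ((fun y => |P.eval y|) '' Z') :=
    BddAbove.mono (Set.image_mono hZ) (isCompact_Icc.image hcont).bddAbove
  have hM0 : 0 ≤ M := le_trans (abs_nonneg _) (le_csSup hMbdd ⟨z0, hz0, rfl⟩)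
  have hMcl : ∀ w ∈ closure Z', |P.eval w| ≤ M := by
    intro w hw
    rcases mem_closure_iff_seq_limit.mp hw with ⟨u, hu, hulim⟩
    have htend : Filter.Tendsto (fun n => |P.eval (u n)|) Filter.atTop (nhds |P.eval w|) :=
      (hcont.tendsto w).comp hulim
    exact le_of_tendsto htend (Filter.Eventually.of_forall fun n =>
      le_csSup hMbdd ⟨u n, hu n, rfl⟩)
  -- the Chebyshev nodes of [a, a+m] and the quantile targets
  set ν := cnode d a (a+m) with hν
  set τ : ℕ → ℝ := fun i => (μ' - m) + (ν i - a) with hτ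
  have hνmem : ∀ i, ν i ∈ Icc a (a+m) := fun i => cnode_mem hd (by linarith) i
  have hτ0 : ∀ i, 0 < τ i := by
    intro i
    have := (hνmem i).1
    simp only [hτ]
    linarith
  have hτμ : ∀ i, τ i ≤ μ' := by
    intro i
    have := (hνmem i).2
    simp only [hτ]
    linarith
  choose x hx1 hx2 hx3 using fun i => quantile Z' a b hZ hfin (hτ0 i) (hτμ i)
  -- spacing of the quantile points
  have hgap : ∀ j i, i ≤ d → j < i → τ i - τ j ≤ x i - x j := by
    intro j i hi hji
    have hτlt : τ j < τ i := by
      have := cnode_lt hd (show a < a+m by linarith) hi hji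
      simp only [hτ, hν]
      linarith
    have hxlt : x j ≤ x i := by
      by_contra hcon
      push_neg at hcon
      have := F_mono Z' hfin hcon.le
      simp only at this
      rw [hx3 i, hx3 j] at this
      linarith
    have := F_lip Z' hfin hxlt
    rw [hx3 i, hx3 j] at this
    linarith
  have hxinj : Set.InjOn x (Finset.range (d+1)) := by
    intro u hu v' hv' huv
    simp only [Finset.coe_range, Set.mem_Iio] at hu hv'
    by_contra hne
    rcases Nat.lt_or_ge u v' with h | h
    · have h1 := hgap u v' (by omega) h
      have h2 : τ u < τ v' := by
        have := cnode_lt hd (show a < a+m by linarith) (by omega) h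
        simp only [hτ, hν]
        linarith
      rw [huv] at h1
      linarith
    · have h := Nat.lt_of_le_of_ne h (Ne.symm hne)
      have h1 := hgap v' u (by omega) h
      have h2 : τ v' < τ u := by
        have := cnode_lt hd (show a < a+m by linarith) (by omega) h
        simp only [hτ, hν]
        linarith
      rw [huv] at h1
      linarith
  have hνx : ∀ j, j ≤ d → ν j ≤ x j := by
    intro j hj
    rcases Nat.eq_zero_or_pos j with h0 | hpos
    · subst h0
      have : ν 0 = a := cnode_zero hd a (a+m)
      rw [this]
      exact (hx1 0).1
    · have := hgap 0 j hj hpos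
      have hτ0j : τ j - τ 0 = ν j - ν 0 := by simp only [hτ]; ring
      have hν0 : ν 0 = a := cnode_zero hd a (a+m)
      have hx0 : a ≤ x 0 := (hx1 0).1
      rw [hτ0j, hν0] at this
      linarith
  -- Lagrange interpolation of P at the quantile points
  have hLag := lagrange_eval d x hxinj P hP b
  rw [hLag]
  have hbound : ∀ i ∈ Finset.range (d+1),
      |P.eval (x i) * ∏ j ∈ (Finset.range (d+1)).erase i, ((x i - x j)⁻¹ * (b - x j))|
        ≤ M * ∏ j ∈ (Finset.range (d+1)).erase i, ((b - ν j) / |ν i - ν j|) := by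
    intro i hi
    rw [Finset.mem_range] at hi
    have hi' : i ≤ d := by omega
    rw [abs_mul]
    have h2 : |∏ j ∈ (Finset.range (d+1)).erase i, ((x i - x j)⁻¹ * (b - x j))|
        ≤ ∏ j ∈ (Finset.range (d+1)).erase i, ((b - ν j) / |ν i - ν j|) := by
      rw [Finset.abs_prod]
      apply Finset.prod_le_prod (fun j _ => abs_nonneg _)
      intro j hj
      rw [Finset.mem_erase, Finset.mem_range] at hj
      have hj' : j ≤ d := by omega
      have hji : j ≠ i := hj.1
      -- |x i - x j| ≥ |ν i - ν j| > 0 and 0 ≤ b - x j ≤ b - ν j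
      have hgap2 : |ν i - ν j| ≤ |x i - x j| ∧ 0 < |ν i - ν j| := by
        rcases Nat.lt_or_ge j i with h | h
        · have hg := hgap j i hi' h
          have hνlt := cnode_lt hd (show a < a+m by linarith) hi' h
          simp only [hν] at hνlt ⊢
          have hττ : τ i - τ j = cnode d a (a+m) i - cnode d a (a+m) j := by
            simp only [hτ, hν]; ring
          rw [hττ] at hg
          rw [abs_of_pos (by linarith), abs_of_pos (by linarith)]
          constructor <;> linarith
        · have h' : i < j := by omega
          have hg := hgap i j hj' h'
          have hνlt := cnode_lt hd (show a < a+m by linarith) hj' h'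
          simp only [hν] at hνlt ⊢
          have hττ : τ j - τ i = cnode d a (a+m) j - cnode d a (a+m) i := by
            simp only [hτ, hν]; ring
          rw [hττ] at hg
          rw [abs_of_neg (by linarith), abs_of_neg (by linarith)]
          constructor <;> linarith
      have hxb : x j ≤ b := (hx1 j).2
      have hνxj : ν j ≤ x j := hνx j hj'
      rw [abs_mul, abs_inv, mul_comm]
      rw [div_eq_mul_inv]
      apply mul_le_mul
      · rw [abs_of_nonneg (by linarith)]
        linarith
      · exact inv_anti₀ hgap2.2 hgap2.1
      · positivity
      · linarith
    exact mul_le_mul (hMcl (x i) (hx2 i)) h2 (abs_nonneg _) hM0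
  calc |∑ i ∈ Finset.range (d+1), P.eval (x i) *
        ∏ j ∈ (Finset.range (d+1)).erase i, ((x i - x j)⁻¹ * (b - x j))|
      ≤ ∑ i ∈ Finset.range (d+1), |P.eval (x i) *
        ∏ j ∈ (Finset.range (d+1)).erase i, ((x i - x j)⁻¹ * (b - x j))| :=
        Finset.abs_sum_le_sum_abs _ _
    _ ≤ ∑ i ∈ Finset.range (d+1),
          M * ∏ j ∈ (Finset.range (d+1)).erase i, ((b - ν j) / |ν i - ν j|) :=
        Finset.sum_le_sum hbound
    _ = M * ∑ i ∈ Finset.range (d+1),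
          ∏ j ∈ (Finset.range (d+1)).erase i, ((b - ν j) / |ν i - ν j|) := by
        rw [Finset.mul_sum]
    _ = M * (Chebyshev.T ℝ (d:ℤ)).eval ((2*b - (a+(a+m)))/((a+m)-a)) := by
        rw [chebSum d hd a (a+m) b (by linarith)]
    _ = (Chebyshev.T ℝ (d:ℤ)).eval ((2*(b-a) - m)/m) * M := by
        rw [mul_comm]
        congr 2
        ring_nf

lemma remez_right (d : ℕ) (hd : 1 ≤ d) (P : Polynomial ℝ) (hP : P.natDegree ≤ d)
    (a b : ℝ) (Z' : Set ℝ) (hZ : Z' ⊆ Icc a b) (hμ : 0 < volume Z') :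
    |P.eval b| ≤ (Chebyshev.T ℝ (d:ℤ)).eval
        ((2*(b-a) - (volume Z').toReal)/(volume Z').toReal)
      * sSup ((fun y => |P.eval y|) '' Z') := by
  have hfin : volume Z' ≠ ⊤ := by
    refine ne_top_of_le_ne_top ?_ (measure_mono hZ)
    rw [Real.volume_Icc]
    exact ENNReal.ofReal_ne_top
  set μ' := (volume Z').toReal with hμ'def
  have hμ'pos : 0 < μ' := ENNReal.toReal_pos hμ.ne' hfin
  set M := sSup ((fun y => |P.eval y|) '' Z') with hM
  set g : ℝ → ℝ := fun m => (Chebyshev.T ℝ (d:ℤ)).eval ((2*(b-a) - m)/m) * M with hg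
  have key : ∀ m ∈ Ioo (0:ℝ) μ', |P.eval b| ≤ g m := fun m hm =>
    remez_right_aux d hd P hP a b Z' hZ hμ m hm.1 hm.2
  have hcg : ContinuousAt g μ' := by
    apply ContinuousAt.mul ?_ continuousAt_const
    apply (Polynomial.continuous (Chebyshev.T ℝ (d:ℤ))).continuousAt.comp
    exact ContinuousAt.div (by fun_prop) continuousAt_id hμ'pos.ne'
  have htend : Filter.Tendsto g (nhdsWithin μ' (Iio μ')) (nhds (g μ')) :=
    (hcg.continuousWithinAt).tendsto
  have hev : ∀ᶠ m in nhdsWithin μ' (Iio μ'), |P.eval b| ≤ g m := by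
    filter_upwards [Ioo_mem_nhdsLT_of_mem (show μ' ∈ Ioc (0:ℝ) μ' from ⟨hμ'pos, le_rfl⟩)]
      with m hm
    exact key m hm
  exact ge_of_tendsto htend hev

lemma remez_left (d : ℕ) (hd : 1 ≤ d) (P : Polynomial ℝ) (hP : P.natDegree ≤ d)
    (a b : ℝ) (Z' : Set ℝ) (hZ : Z' ⊆ Icc a b) (hZm : MeasurableSet Z')
    (hμ : 0 < volume Z') :
    |P.eval a| ≤ (Chebyshev.T ℝ (d:ℤ)).eval
        ((2*(b-a) - (volume Z').toReal)/(volume Z').toReal)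
      * sSup ((fun y => |P.eval y|) '' Z') := by
  set Q := P.comp (C (a+b) - X) with hQ
  have hQev : ∀ y : ℝ, Q.eval y = P.eval ((a+b) - y) := by
    intro y
    rw [hQ, Polynomial.eval_comp, Polynomial.eval_sub, Polynomial.eval_C, Polynomial.eval_X]
  have hQdeg : Q.natDegree ≤ d := by
    refine le_trans (Polynomial.natDegree_comp_le) ?_
    have h1 : (C (a+b) - X : ℝ[X]).natDegree ≤ 1 := by
      refine le_trans (Polynomial.natDegree_sub_le _ _) ?_
      simp [Polynomial.natDegree_X_le]
    calc P.natDegree * (C (a+b) - X : ℝ[X]).natDegree ≤ d * 1 := Nat.mul_le_mul hP h1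
      _ = d := by omega
  set Z'' := (fun t : ℝ => (a+b) - t) '' Z' with hZ''
  have hpre : Z'' = (fun t : ℝ => (a+b) - t) ⁻¹' Z' := by
    ext t
    simp only [hZ'', Set.mem_image, Set.mem_preimage]
    constructor
    · rintro ⟨z, hz, rfl⟩
      simpa using hz
    · intro h
      exact ⟨(a+b) - t, h, by ring⟩
  have hmp : MeasurePreserving (fun t : ℝ => (a+b) - t) volume volume := by
    have h1 := Measure.measurePreserving_neg (volume : Measure ℝ)
    have h2 := measurePreserving_add_left (volume : Measure ℝ) (a+b)
    have := h2.comp h1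
    simpa [Function.comp_def, sub_eq_add_neg] using this
  have hvol : volume Z'' = volume Z' := by
    rw [hpre]
    exact hmp.measure_preimage hZm.nullMeasurableSet
  have hZ''sub : Z'' ⊆ Icc a b := by
    rintro t ⟨z, hz, rfl⟩
    have := hZ hz
    exact ⟨by simp only [Set.mem_Icc] at this ⊢; linarith [this.2],
      by simp only [Set.mem_Icc] at this ⊢; linarith [this.1]⟩
  have himg : (fun y => |Q.eval y|) '' Z'' = (fun y => |P.eval y|) '' Z' := by
    rw [hZ'', Set.image_image]
    apply Set.image_congr
    intro t _
    rw [hQev]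
    ring_nf
  have hμ'' : 0 < volume Z'' := by rw [hvol]; exact hμ
  have := remez_right d hd Q hQdeg a b Z'' hZ''sub hμ''
  rw [hvol, himg] at this
  have hQb : Q.eval b = P.eval a := by rw [hQev]; ring_nf
  rwa [hQb] at this

/-- **Classical Remez inequality.** -/
theorem remez_classical (d : ℕ) (hd : 1 ≤ d) (P : Polynomial ℝ) (hP : P.natDegree ≤ d)
    (Z : Set ℝ) (hZ : Z ⊆ Icc (-1 : ℝ) 1) (hZm : MeasurableSet Z)
    (hμ : 0 < volume Z) :
    ∀ x ∈ Icc (-1 : ℝ) 1,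
      |P.eval x| ≤
        (Polynomial.Chebyshev.T ℝ d).eval
            ((4 - (volume Z).toReal) / (volume Z).toReal) *
          sSup ((fun y => |P.eval y|) '' Z) := by
  intro x hx
  obtain ⟨hx1, hx2⟩ := hx
  have hfin : volume Z ≠ ⊤ := by
    refine ne_top_of_le_ne_top ?_ (measure_mono hZ)
    rw [Real.volume_Icc]
    exact ENNReal.ofReal_ne_top
  set μ := (volume Z).toReal with hμdef
  have hμpos : 0 < μ := ENNReal.toReal_pos hμ.ne' hfin
  set M := sSup ((fun y => |P.eval y|) '' Z) with hM
  have hcont : Continuous (fun y : ℝ => |P.eval y|) := (Polynomial.continuous P).abs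
  have hMbdd : BddAbove ((fun y => |P.eval y|) '' Z) :=
    BddAbove.mono (Set.image_mono hZ) (isCompact_Icc.image hcont).bddAbove
  obtain ⟨z0, hz0⟩ := nonempty_of_measure_ne_zero hμ.ne'
  have hM0 : 0 ≤ M := le_trans (abs_nonneg _) (le_csSup hMbdd ⟨z0, hz0, rfl⟩)
  rcases eq_or_lt_of_le hx2 with hxeq | hxlt
  · -- x = 1
    rw [hxeq]
    have key := remez_right d hd P hP (-1) 1 Z hZ hμ
    have harg : (2*((1:ℝ) - (-1)) - μ)/μ = (4 - μ)/μ := by norm_num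
    rwa [harg] at key
  rcases eq_or_lt_of_le hx1 with hxeq | hxgt
  · -- x = -1
    rw [← hxeq]
    have key := remez_left d hd P hP (-1) 1 Z hZ hZm hμ
    have harg : (2*((1:ℝ) - (-1)) - μ)/μ = (4 - μ)/μ := by norm_num
    rwa [harg] at key
  -- interior point
  set AL := Z ∩ Icc (-1) x with hAL
  set AR := Z ∩ Icc x 1 with hAR
  have hfinL : volume AL ≠ ⊤ := ne_top_of_le_ne_top hfin (measure_mono inter_subset_left)
  have hfinR : volume AR ≠ ⊤ := ne_top_of_le_ne_top hfin (measure_mono inter_subset_left)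
  set l := (volume AL).toReal with hl
  set r := (volume AR).toReal with hr
  have hsum : μ ≤ l + r := by
    have h1 : Z ⊆ AL ∪ AR := by
      intro z hz
      have hz' := hZ hz
      rcases le_total z x with h | h
      · exact Or.inl ⟨hz, hz'.1, h⟩
      · exact Or.inr ⟨hz, h, hz'.2⟩
    have h2 : volume Z ≤ volume AL + volume AR :=
      le_trans (measure_mono h1) (measure_union_le _ _)
    calc μ ≤ (volume AL + volume AR).toReal :=
          ENNReal.toReal_mono (ENNReal.add_ne_top.mpr ⟨hfinL, hfinR⟩) h2
      _ = l + r := ENNReal.toReal_add hfinL hfinR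
  have hlle : l ≤ x + 1 := by
    have h1 : volume AL ≤ volume (Icc (-1:ℝ) x) := measure_mono inter_subset_right
    rw [Real.volume_Icc] at h1
    calc l ≤ (ENNReal.ofReal (x - (-1))).toReal := ENNReal.toReal_mono ENNReal.ofReal_ne_top h1
      _ ≤ x + 1 := by rw [ENNReal.toReal_ofReal (by linarith)]; linarith
  have hrle : r ≤ 1 - x := by
    have h1 : volume AR ≤ volume (Icc x 1) := measure_mono inter_subset_right
    rw [Real.volume_Icc] at h1
    calc r ≤ (ENNReal.ofReal (1 - x)).toReal := ENNReal.toReal_mono ENNReal.ofReal_ne_top h1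
      _ ≤ 1 - x := by rw [ENNReal.toReal_ofReal (by linarith)]
  by_cases hRc : μ * (1-x) ≤ 2*r
  · -- use the right-hand side interval [x, 1]
    have hrpos : 0 < r := by nlinarith
    have hARpos : 0 < volume AR := by
      rcases eq_or_ne (volume AR) 0 with h | h
      · rw [hr, h] at hrpos; simp at hrpos
      · exact pos_iff_ne_zero.mpr h
    have key := remez_left d hd P hP x 1 AR inter_subset_right
      (hZm.inter measurableSet_Icc) hARpos
    have hne : ((fun y => |P.eval y|) '' AR).Nonempty :=
      Set.Nonempty.image _ (nonempty_of_measure_ne_zero hARpos.ne')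
    have hsub : sSup ((fun y => |P.eval y|) '' AR) ≤ M :=
      csSup_le_csSup hMbdd hne (Set.image_mono inter_subset_left)
    have harg1 : 1 ≤ (2*(1-x) - r)/r := by
      rw [le_div_iff₀ hrpos]
      linarith
    have harg2 : (2*(1-x) - r)/r ≤ (4-μ)/μ := by
      rw [div_le_div_iff₀ hrpos hμpos]
      nlinarith
    have hT0 : (0:ℝ) ≤ (Chebyshev.T ℝ (d:ℤ)).eval ((2*(1-x) - r)/r) :=
      le_trans zero_le_one (one_le_T d harg1)
    calc |P.eval x| ≤ (Chebyshev.T ℝ (d:ℤ)).eval ((2*(1-x) - r)/r)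
          * sSup ((fun y => |P.eval y|) '' AR) := key
      _ ≤ (Chebyshev.T ℝ (d:ℤ)).eval ((2*(1-x) - r)/r) * M :=
          mul_le_mul_of_nonneg_left hsub hT0
      _ ≤ (Chebyshev.T ℝ (d:ℤ)).eval ((4-μ)/μ) * M :=
          mul_le_mul_of_nonneg_right (T_mono d harg1 harg2) hM0
  · -- use the left-hand side interval [-1, x]
    push_neg at hRc
    have hLc : μ * (x+1) ≤ 2*l := by nlinarith
    have hlpos : 0 < l := by nlinarith
    have hALpos : 0 < volume AL := by
      rcases eq_or_ne (volume AL) 0 with h | h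
      · rw [hl, h] at hlpos; simp at hlpos
      · exact pos_iff_ne_zero.mpr h
    have key := remez_right d hd P hP (-1) x AL inter_subset_right hALpos
    have harg0 : (2*(x - (-1)) - l)/l = (2*(x+1) - l)/l := by ring_nf
    rw [harg0] at key
    have hne : ((fun y => |P.eval y|) '' AL).Nonempty :=
      Set.Nonempty.image _ (nonempty_of_measure_ne_zero hALpos.ne')
    have hsub : sSup ((fun y => |P.eval y|) '' AL) ≤ M :=
      csSup_le_csSup hMbdd hne (Set.image_mono inter_subset_left)
    have harg1 : 1 ≤ (2*(x+1) - l)/l := by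
      rw [le_div_iff₀ hlpos]
      linarith
    have harg2 : (2*(x+1) - l)/l ≤ (4-μ)/μ := by
      rw [div_le_div_iff₀ hlpos hμpos]
      nlinarith
    have hT0 : (0:ℝ) ≤ (Chebyshev.T ℝ (d:ℤ)).eval ((2*(x+1) - l)/l) :=
      le_trans zero_le_one (one_le_T d harg1)
    calc |P.eval x| ≤ (Chebyshev.T ℝ (d:ℤ)).eval ((2*(x+1) - l)/l)
          * sSup ((fun y => |P.eval y|) '' AL) := key
      _ ≤ (Chebyshev.T ℝ (d:ℤ)).eval ((2*(x+1) - l)/l) * M :=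
          mul_le_mul_of_nonneg_left hsub hT0
      _ ≤ (Chebyshev.T ℝ (d:ℤ)).eval ((4-μ)/μ) * M :=
          mul_le_mul_of_nonneg_right (T_mono d harg1 harg2) hM0
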